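/- One-step Stratonovich consistency of Heun's method for SDEs with constant-in-time smooth coefficients: for the scheme x* = xₙ + Δt f(xₙ) + ΔW g(xₙ), x_{n+1} = xₙ + (Δt/2)(f(xₙ)+f(x*)) + (ΔW/2)(g(xₙ)+g(x*)), with f, g : ℝ → ℝ twice continuously differentiable with bounded derivatives and ΔW ~ N(0, Δt), one has x_{n+1} = xₙ + Δt f(xₙ) + ΔW g(xₙ) + (ΔW²/2) g(xₙ) g'(xₙ) + R, where E[R²] ≤ C (Δt)³ for a constant C depending only on bounds of f, g and their derivatives. -/

import Mathlib

/-!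
With `h = Δt f(x) + ΔW g(x)` the predictor is `x* = x + h`, and Heun's step minus the
Stratonovich–Milstein step equals
`(Δt/2)(f(x*) - f(x)) + (ΔW/2)(g(x*) - g(x) - g'(x) h) + (Δt ΔW/2) g'(x) f(x)`.
The mean value theorem for `f` and the first-order Taylor bound for `g` make this
`O(Δt² + Δt |ΔW| + |ΔW|³)` pointwise, with a constant depending only on `M`. Squaring and using the
Gaussian moments `E[ΔW²] ∝ Δt`, `E[ΔW⁶] ∝ Δt³` (by scaling from `N(0,1)`) gives `E[R²] = O(Δt³)`
for `Δt ≤ 1`.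
-/

open MeasureTheory ProbabilityTheory
open scoped NNReal

section Calculus

variable {φ : ℝ → ℝ} {C : ℝ}

theorem abs_sub_le_of_abs_deriv_le (hφ : Differentiable ℝ φ) (hC : ∀ x, |deriv φ x| ≤ C)
    (x y : ℝ) : |φ y - φ x| ≤ C * |y - x| :=
  Convex.norm_image_sub_le_of_norm_deriv_le (fun z _ => hφ z) (fun z _ => hC z) convex_univ
    (Set.mem_univ x) (Set.mem_univ y)

theorem abs_sub_sub_deriv_mul_le (hφ : Differentiable ℝ φ) (hφ' : Differentiable ℝ (deriv φ))
    (hC : ∀ x, |deriv (deriv φ) x| ≤ C) (x h : ℝ) :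
    |φ (x + h) - φ x - deriv φ x * h| ≤ C * h ^ 2 := by
  set ψ : ℝ → ℝ := fun y => φ y - deriv φ x * y
  have hψ : ∀ z, HasDerivAt ψ (deriv φ z - deriv φ x) z := fun z => by
    have h := (hφ z).hasDerivAt.sub ((hasDerivAt_id' z).const_mul (deriv φ x))
    rwa [mul_one] at h
  have hψ' : ∀ z ∈ Set.uIcc x (x + h), ‖deriv ψ z‖ ≤ C * |h| := fun z hz => by
    have hz' : |z - x| ≤ |h| := by simpa using Set.abs_sub_left_of_mem_uIcc hz
    rw [(hψ z).deriv, Real.norm_eq_abs]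
    calc |deriv φ z - deriv φ x| ≤ C * |z - x| := abs_sub_le_of_abs_deriv_le hφ' hC x z
      _ ≤ C * |h| := by gcongr; exact (abs_nonneg _).trans (hC x)
  have key := Convex.norm_image_sub_le_of_norm_deriv_le (fun z _ => (hψ z).differentiableAt)
    hψ' (convex_uIcc x (x + h)) Set.left_mem_uIcc Set.right_mem_uIcc
  calc |φ (x + h) - φ x - deriv φ x * h| = ‖ψ (x + h) - ψ x‖ := by
        rw [Real.norm_eq_abs]; congr 1; ring
    _ ≤ C * |h| * ‖x + h - x‖ := key
    _ = C * h ^ 2 := by rw [add_sub_cancel_left, Real.norm_eq_abs, mul_assoc, ← sq, sq_abs]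

end Calculus

namespace ProbabilityTheory

theorem integrable_pow_gaussianReal (μ : ℝ) (v : ℝ≥0) (n : ℕ) :
    Integrable (fun x : ℝ => x ^ n) (gaussianReal μ v) := by
  rcases eq_or_ne n 0 with rfl | hn
  · simp
  refine ((memLp_id_gaussianReal (n : ℝ≥0)).integrable_norm_pow hn).mono' ?_ ?_
  · fun_prop
  · filter_upwards with x using by simp [norm_pow]

theorem integral_pow_two_mul_gaussianReal (v : ℝ≥0) (n : ℕ) :
    ∫ x, x ^ (2 * n) ∂gaussianReal 0 v = v ^ n * ∫ x, x ^ (2 * n) ∂gaussianReal 0 1 := by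
  have hscale : gaussianReal 0 v = (gaussianReal 0 1).map (Real.sqrt v * ·) := by
    rw [gaussianReal_map_const_mul]
    congr 1
    · simp
    · ext; simp [Real.sq_sqrt v.coe_nonneg]
  rw [hscale, integral_map (by fun_prop) (by fun_prop)]
  simp_rw [mul_pow, pow_mul, Real.sq_sqrt v.coe_nonneg]
  exact integral_const_mul _ _

variable {Ω : Type*} [MeasurableSpace Ω] {P : Measure Ω} {X : Ω → ℝ} {v : ℝ≥0}

theorem HasLaw.integrable_pow_of_gaussianReal {μ : ℝ} (hX : HasLaw X (gaussianReal μ v) P)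
    (n : ℕ) : Integrable (fun ω => X ω ^ n) P :=
  (hX.map_eq ▸ integrable_pow_gaussianReal μ v n).comp_aemeasurable hX.aemeasurable

theorem HasLaw.integral_pow_two_mul_of_gaussianReal (hX : HasLaw X (gaussianReal 0 v) P) (n : ℕ) :
    ∫ ω, X ω ^ (2 * n) ∂P = v ^ n * ∫ x, x ^ (2 * n) ∂gaussianReal 0 1 := by
  rw [← integral_pow_two_mul_gaussianReal]
  exact hX.integral_comp (f := fun x : ℝ => x ^ (2 * n)) (by fun_prop)

theorem integral_sq_le_of_abs_le_gaussian (hX : HasLaw X (gaussianReal 0 v) P) (hv : (v : ℝ) ≤ 1)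
    {R : Ω → ℝ} {L : ℝ} (hR : ∀ ω, |R ω| ≤ L * (v ^ 2 + v * |X ω| + |X ω| ^ 3)) :
    ∫ ω, R ω ^ 2 ∂P ≤
      3 * L ^ 2 * (1 + ∫ x, x ^ 2 ∂gaussianReal 0 1 + ∫ x, x ^ 6 ∂gaussianReal 0 1) * v ^ 3 := by
  have := hX.isProbabilityMeasure
  have hpt : ∀ ω, R ω ^ 2 ≤ 3 * L ^ 2 * (v ^ 4 + v ^ 2 * X ω ^ 2 + X ω ^ 6) := fun ω => by
    have hsq : (v ^ 2 + v * |X ω| + |X ω| ^ 3) ^ 2 ≤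
        3 * ((v ^ 2) ^ 2 + (v * |X ω|) ^ 2 + (|X ω| ^ 3) ^ 2) := by
      nlinarith [sq_nonneg ((v : ℝ) ^ 2 - v * |X ω|), sq_nonneg ((v : ℝ) ^ 2 - |X ω| ^ 3),
        sq_nonneg (v * |X ω| - |X ω| ^ 3)]
    have h6 : (|X ω| ^ 3) ^ 2 = X ω ^ 6 := by
      rw [← pow_mul, mul_comm, pow_mul, sq_abs, ← pow_mul]
    calc R ω ^ 2 = |R ω| ^ 2 := (sq_abs _).symm
      _ ≤ (L * (v ^ 2 + v * |X ω| + |X ω| ^ 3)) ^ 2 := pow_le_pow_left₀ (abs_nonneg _) (hR ω) 2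
      _ ≤ L ^ 2 * (3 * ((v ^ 2) ^ 2 + (v * |X ω|) ^ 2 + (|X ω| ^ 3) ^ 2)) := by
        rw [mul_pow]; gcongr
      _ = 3 * L ^ 2 * (v ^ 4 + v ^ 2 * X ω ^ 2 + X ω ^ 6) := by
        rw [h6, mul_pow, sq_abs]; ring
  have hX2 : ∫ ω, X ω ^ 2 ∂P = v * ∫ x, x ^ 2 ∂gaussianReal 0 1 := by
    simpa using hX.integral_pow_two_mul_of_gaussianReal 1
  have hX6 : ∫ ω, X ω ^ 6 ∂P = v ^ 3 * ∫ x, x ^ 6 ∂gaussianReal 0 1 := by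
    simpa using hX.integral_pow_two_mul_of_gaussianReal 3
  have hint : ∀ n, Integrable (fun ω => X ω ^ n) P := hX.integrable_pow_of_gaussianReal
  have hv4 : (v : ℝ) ^ 4 ≤ v ^ 3 := pow_le_pow_of_le_one v.coe_nonneg hv (by norm_num)
  calc ∫ ω, R ω ^ 2 ∂P
      ≤ ∫ ω, 3 * L ^ 2 * (v ^ 4 + v ^ 2 * X ω ^ 2 + X ω ^ 6) ∂P :=
        integral_mono_of_nonneg (.of_forall fun ω => sq_nonneg _)
          ((((integrable_const _).fun_add ((hint 2).const_mul _)).fun_add (hint 6)).const_mul _)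
          (.of_forall hpt)
    _ = 3 * L ^ 2 * (v ^ 4 + v ^ 2 * (v * ∫ x, x ^ 2 ∂gaussianReal 0 1)
          + v ^ 3 * ∫ x, x ^ 6 ∂gaussianReal 0 1) := by
        rw [integral_const_mul, integral_add ((integrable_const _).fun_add ((hint 2).const_mul _))
          (hint 6), integral_add (integrable_const _) ((hint 2).const_mul _), integral_const,
          integral_const_mul, hX2, hX6, probReal_univ, one_smul]
    _ ≤ 3 * L ^ 2 * (1 + ∫ x, x ^ 2 ∂gaussianReal 0 1 + ∫ x, x ^ 6 ∂gaussianReal 0 1) * v ^ 3 := by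
        nlinarith [mul_le_mul_of_nonneg_left hv4 (sq_nonneg L)]

end ProbabilityTheory

noncomputable section Heun

variable (f g : ℝ → ℝ) (Δt ΔW x : ℝ)

def heunPredictor : ℝ := x + Δt * f x + ΔW * g x

def heunStep : ℝ :=
  x + Δt / 2 * (f x + f (heunPredictor f g Δt ΔW x))
    + ΔW / 2 * (g x + g (heunPredictor f g Δt ΔW x))

def stratonovichMilsteinStep : ℝ := x + Δt * f x + ΔW * g x + ΔW ^ 2 / 2 * (g x * deriv g x)

theorem heunStep_sub_stratonovichMilsteinStep :
    heunStep f g Δt ΔW x - stratonovichMilsteinStep f g Δt ΔW x =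
      Δt / 2 * (f (x + (Δt * f x + ΔW * g x)) - f x)
        + ΔW / 2 * (g (x + (Δt * f x + ΔW * g x)) - g x - deriv g x * (Δt * f x + ΔW * g x))
        + Δt * ΔW / 2 * (deriv g x * f x) := by
  simp only [heunStep, stratonovichMilsteinStep, heunPredictor, add_assoc]
  ring

variable {f g Δt ΔW x} {M : ℝ}

theorem abs_heunStep_sub_stratonovichMilsteinStep_le
    (hf : ∀ y, |f y - f x| ≤ M * |y - x|)
    (hg : ∀ h, |g (x + h) - g x - deriv g x * h| ≤ M * h ^ 2)
    (hfx : |f x| ≤ M) (hgx : |g x| ≤ M) (hg'x : |deriv g x| ≤ M)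
    (hΔt₀ : 0 ≤ Δt) (hΔt₁ : Δt ≤ 1) :
    |heunStep f g Δt ΔW x - stratonovichMilsteinStep f g Δt ΔW x| ≤
      (M ^ 2 + M ^ 3) * (Δt ^ 2 + Δt * |ΔW| + |ΔW| ^ 3) := by
  set h := Δt * f x + ΔW * g x
  have hM : 0 ≤ M := (abs_nonneg _).trans hfx
  have hh : |h| ≤ M * (Δt + |ΔW|) :=
    calc |h| ≤ Δt * |f x| + |ΔW| * |g x| := by
          simpa only [abs_mul, abs_of_nonneg hΔt₀] using abs_add_le (Δt * f x) (ΔW * g x)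
      _ ≤ M * (Δt + |ΔW|) := by nlinarith [abs_nonneg ΔW]
  have e₁ : |Δt / 2 * (f (x + h) - f x)| ≤ M ^ 2 / 2 * (Δt * (Δt + |ΔW|)) :=
    calc |Δt / 2 * (f (x + h) - f x)| ≤ Δt / 2 * (M * |h|) := by
          rw [abs_mul, abs_of_nonneg (by positivity)]
          gcongr
          simpa using hf (x + h)
      _ ≤ Δt / 2 * (M * (M * (Δt + |ΔW|))) := by gcongr
      _ = M ^ 2 / 2 * (Δt * (Δt + |ΔW|)) := by ring
  have e₂ : |ΔW / 2 * (g (x + h) - g x - deriv g x * h)| ≤ M ^ 3 / 2 * (|ΔW| * (Δt + |ΔW|) ^ 2) :=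
    calc |ΔW / 2 * (g (x + h) - g x - deriv g x * h)| ≤ |ΔW| / 2 * (M * |h| ^ 2) := by
          rw [abs_mul, abs_div, abs_two, sq_abs]
          gcongr
          exact hg h
      _ ≤ |ΔW| / 2 * (M * (M * (Δt + |ΔW|)) ^ 2) := by gcongr
      _ = M ^ 3 / 2 * (|ΔW| * (Δt + |ΔW|) ^ 2) := by ring
  have e₃ : |Δt * ΔW / 2 * (deriv g x * f x)| ≤ M ^ 2 / 2 * (Δt * |ΔW|) := by
    rw [abs_mul, abs_div, abs_mul, abs_two, abs_mul, abs_of_nonneg hΔt₀]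
    calc Δt * |ΔW| / 2 * (|deriv g x| * |f x|) ≤ Δt * |ΔW| / 2 * (M * M) := by gcongr
      _ = M ^ 2 / 2 * (Δt * |ΔW|) := by ring
  -- `2 Δt ΔW² ≤ Δt² |ΔW| + |ΔW|³` (AM–GM) and `Δt² ≤ Δt` absorb the cross terms of `e₂`.
  have hcross : |ΔW| * (Δt + |ΔW|) ^ 2 ≤ 2 * (Δt * |ΔW| + |ΔW| ^ 3) := by
    nlinarith [mul_nonneg (abs_nonneg ΔW) (sq_nonneg (Δt - |ΔW|)),
      mul_nonneg (mul_nonneg hΔt₀ (abs_nonneg ΔW)) (sub_nonneg.mpr hΔt₁)]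
  rw [heunStep_sub_stratonovichMilsteinStep]
  calc _ ≤ |Δt / 2 * (f (x + h) - f x)| + |ΔW / 2 * (g (x + h) - g x - deriv g x * h)|
          + |Δt * ΔW / 2 * (deriv g x * f x)| := abs_add_three _ _ _
    _ ≤ _ := by
      nlinarith [mul_le_mul_of_nonneg_left hcross (pow_nonneg hM 3), pow_nonneg hM 3, sq_nonneg M,
        mul_nonneg (pow_nonneg hM 3) (sq_nonneg Δt), mul_nonneg (sq_nonneg M) (sq_nonneg Δt),
        mul_nonneg (sq_nonneg M) (pow_nonneg (abs_nonneg ΔW) 3)]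

end Heun

/-- One-step Stratonovich consistency of Heun's (improved Euler) method for the
SDE `dx = f(x) dt + g(x) ∘ dW` with time-independent `C²` coefficients having
bounded values and derivatives.  For the scheme
`x* = xₙ + Δt f(xₙ) + ΔW g(xₙ)`,
`x_{n+1} = xₙ + (Δt/2)(f(xₙ) + f(x*)) + (ΔW/2)(g(xₙ) + g(x*))`
with `ΔW ~ N(0, Δt)`, the one-step remainder
`R = x_{n+1} - xₙ - Δt f(xₙ) - ΔW g(xₙ) - (ΔW²/2) g(xₙ) g'(xₙ)`
satisfies `E[R²] ≤ C (Δt)³`, for a constant `C` depending only on the bound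
`M` on `f`, `g` and their first and second derivatives. -/
theorem heun_stratonovich_consistency
    (f g : ℝ → ℝ) (hf : ContDiff ℝ 2 f) (hg : ContDiff ℝ 2 g)
    (M : ℝ)
    (hbd : ∀ x, |f x| ≤ M ∧ |g x| ≤ M ∧ |deriv f x| ≤ M ∧ |deriv g x| ≤ M ∧
      |deriv (deriv f) x| ≤ M ∧ |deriv (deriv g) x| ≤ M) :
    ∃ C : ℝ, 0 < C ∧
      ∀ {Ω : Type} [inst : MeasurableSpace Ω] (P : Measure Ω)
        [IsProbabilityMeasure P]
        (Δt : NNReal) (_hΔt : (Δt : ℝ) ≤ 1) (ΔW : Ω → ℝ)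
        (_hmeas : Measurable ΔW)
        (_hlaw : Measure.map ΔW P = gaussianReal 0 Δt) (xn : ℝ),
      ∫ ω,
        ((xn + (Δt : ℝ) / 2 * (f xn + f (xn + Δt * f xn + ΔW ω * g xn))
            + ΔW ω / 2 * (g xn + g (xn + Δt * f xn + ΔW ω * g xn)))
          - (xn + (Δt : ℝ) * f xn + ΔW ω * g xn
            + (ΔW ω) ^ 2 / 2 * (g xn * deriv g xn))) ^ 2 ∂P
        ≤ C * (Δt : ℝ) ^ 3 := by
  have hf' : Differentiable ℝ f := hf.differentiable two_ne_zero
  have hg' : Differentiable ℝ g := hg.differentiable two_ne_zero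
  have hg'' : Differentiable ℝ (deriv g) := (hg.iterate_deriv' 1 1).differentiable one_ne_zero
  have hf_lip := abs_sub_le_of_abs_deriv_le hf' fun y => (hbd y).2.2.1
  have hg_taylor := abs_sub_sub_deriv_mul_le hg' hg'' fun y => (hbd y).2.2.2.2.2
  refine ⟨3 * (M ^ 2 + M ^ 3) ^ 2 *
    (1 + ∫ x, x ^ 2 ∂gaussianReal 0 1 + ∫ x, x ^ 6 ∂gaussianReal 0 1) + 1, by positivity, ?_⟩
  intro Ω _ P _ Δt hΔt ΔW hmeas hlaw xn
  refine (integral_sq_le_of_abs_le_gaussian ⟨hmeas.aemeasurable, hlaw⟩ hΔt fun ω =>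
    abs_heunStep_sub_stratonovichMilsteinStep_le (ΔW := ΔW ω) (hf_lip xn) (hg_taylor xn)
      (hbd xn).1 (hbd xn).2.1 (hbd xn).2.2.2.1 Δt.coe_nonneg hΔt).trans ?_
  gcongr
  linarith
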